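/- arXiv:1810.01028 — 3 statements merged into one kernel-verified Lean document; each statement's English description precedes it below -/
import Mathlib

section
/- Exactness of the Gauss–Hermite quadrature rule: for every n ≥ 1, the probabilists' Hermite polynomial He_n has exactly n distinct real roots x_1 < … < x_n, and for every real polynomial p of degree at most 2n − 1, ∫_{ℝ} p(x)·exp(−x²/2)/√(2π) dx = Σ_{i=1}^{n} w_i·p(x_i), where the quadrature weights are w_i := (n−1)! / (n·(He_{n−1}(x_i))²). -/
/-!
Let `𝔼γ` be the standard Gaussian expectation on `ℝ[X]`. Since `s' = -x s`, integration
by parts gives `𝔼γ (p' - X p) = 0`, and with `He_{n+1} = X He_n - He_n'` this yields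
`𝔼γ (q He_n) = 𝔼γ (q⁽ⁿ⁾)`: `He_n` is orthogonal to every polynomial of lower degree, and
`𝔼γ (q He_n) = n!` for monic `q` of degree `n`.

Because `𝔼γ` is positive on nonzero nonnegative polynomials, such an orthogonal polynomial
has `n` simple real roots `x_i`. Dividing `p` by `He_n` leaves a remainder of degree `< n`,
which Lagrange interpolation at the `x_i` integrates exactly; this gives the quadrature rule
with weights `𝔼γ ℓ_i`, which are computed by applying the rule to `(He_n / (X - x_i)) He_{n-1}`.
-/

open MeasureTheory Real Polynomial

section GaussQuadrature

open Finset

variable {K : Type*} [Field K] (L : K[X] →ₗ[K] K) {n : ℕ} {x : Fin n → K}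

def IsOrthogonalToLowerDegree (P : K[X]) : Prop :=
  ∀ q : K[X], q.natDegree < P.natDegree → L (q * P) = 0

theorem map_eq_sum_lagrange_basis_of_degree_lt (hx : Function.Injective x) {r : K[X]}
    (hr : r.degree < n) : L r = ∑ i, L (Lagrange.basis univ x i) * r.eval (x i) := by
  conv_lhs => rw [Lagrange.eq_interpolate (s := univ) (f := r) hx.injOn (by simpa using hr),
    Lagrange.interpolate_apply, map_sum]
  refine sum_congr rfl fun i _ => ?_
  rw [← smul_eq_C_mul, map_smul, smul_eq_mul, mul_comm]

theorem map_eq_sum_lagrange_basis_of_orthogonal {P : K[X]} (hP : P.Monic)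
    (hPn : P.natDegree = n) (horth : IsOrthogonalToLowerDegree L P)
    (hx : Function.Injective x) (hroot : ∀ i, P.IsRoot (x i)) {p : K[X]}
    (hp : p.natDegree < 2 * n) : L p = ∑ i, L (Lagrange.basis univ x i) * p.eval (x i) := by
  have hdiv : (p /ₘ P).natDegree < P.natDegree := by
    rw [natDegree_divByMonic p hP]; omega
  have hmod : (p %ₘ P).degree < n := by
    simpa [degree_eq_natDegree hP.ne_zero, hPn] using degree_modByMonic_lt p hP
  have heval (i : Fin n) : (p %ₘ P).eval (x i) = p.eval (x i) := by
    rw [modByMonic_eq_sub_mul_div p P, eval_sub, eval_mul, hroot i, zero_mul, sub_zero]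
  conv_lhs => rw [← modByMonic_add_div p P, map_add, mul_comm, horth _ hdiv, add_zero,
    map_eq_sum_lagrange_basis_of_degree_lt L hx hmod]
  simp only [heval]

end GaussQuadrature

section PositiveFunctional

variable (L : ℝ[X] →ₗ[ℝ] ℝ) {P : ℝ[X]}

/-- Split `P = w * q` with `w` the product of `X - a` over its real roots and `q` without real
roots; if `w` had degree `< deg P`, then `w * P = w ^ 2 * q ≥ 0` would be orthogonal to `P`. -/
theorem card_roots_eq_natDegree_of_orthogonal
    (hL : ∀ p : ℝ[X], p ≠ 0 → (∀ t, 0 ≤ p.eval t) → 0 < L p)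
    (horth : IsOrthogonalToLowerDegree L P) (hP : P.Monic) :
    Multiset.card P.roots = P.natDegree := by
  obtain ⟨q, hfac, hdeg, hq⟩ := P.exists_prod_multiset_X_sub_C_mul
  set w := (P.roots.map fun a => X - C a).prod
  have hw : w.Monic := monic_multiset_prod_of_monic _ _ fun a _ => monic_X_sub_C a
  have hqm : q.Monic := hw.of_mul_monic_left (hfac ▸ hP)
  have hqpos (t : ℝ) : 0 < q.eval t :=
    zero_lt_eval_of_roots_lt_of_leadingCoeff_nonneg
      (fun y hy => absurd ((mem_roots hqm.ne_zero).2 hy) (by simp [hq]))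
      (hqm.leadingCoeff ▸ zero_le_one)
  by_contra hne
  have hwP : L (w * P) = 0 := horth w (by rw [natDegree_multiset_prod_X_sub_C_eq_card]; omega)
  refine (hL (w * P) (mul_ne_zero hw.ne_zero hP.ne_zero) fun t => ?_).ne' hwP
  rw [← hfac, ← mul_assoc, eval_mul, eval_mul]
  exact mul_nonneg (mul_self_nonneg _) (hqpos t).le

/-- A double root `a` would make `(P / (X - a) ^ 2) * P` a square orthogonal to `P`. -/
theorem nodup_roots_of_orthogonal
    (hL : ∀ p : ℝ[X], p ≠ 0 → (∀ t, 0 ≤ p.eval t) → 0 < L p)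
    (horth : IsOrthogonalToLowerDegree L P) (hP : P ≠ 0) : P.roots.Nodup := by
  classical
  rw [Multiset.nodup_iff_count_le_one]
  intro a
  by_contra! htwo
  rw [count_roots, ← Nat.succ_le_iff, le_rootMultiplicity_iff hP] at htwo
  obtain ⟨g, rfl⟩ := htwo
  have hg : g ≠ 0 := right_ne_zero_of_mul hP
  have hgP : L (g * ((X - C a) ^ 2 * g)) = 0 := horth g (by
    rw [natDegree_mul (pow_ne_zero 2 (X_sub_C_ne_zero a)) hg, natDegree_pow, natDegree_X_sub_C]
    omega)
  refine (hL _ (mul_ne_zero hg hP) fun t => ?_).ne' hgP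
  have : eval t (g * ((X - C a) ^ 2 * g)) = ((t - a) * eval t g) ^ 2 := by
    simp only [eval_mul, eval_pow, eval_sub, eval_X, eval_C]; ring
  rw [this]
  exact sq_nonneg _

theorem card_toFinset_roots_eq_natDegree_of_orthogonal
    (hL : ∀ p : ℝ[X], p ≠ 0 → (∀ t, 0 ≤ p.eval t) → 0 < L p)
    (horth : IsOrthogonalToLowerDegree L P) (hP : P.Monic) :
    P.roots.toFinset.card = P.natDegree := by
  rw [Multiset.toFinset_card_of_nodup (nodup_roots_of_orthogonal L hL horth hP.ne_zero),
    card_roots_eq_natDegree_of_orthogonal L hL horth hP]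

end PositiveFunctional

theorem Polynomial.exists_strictMono_enum_roots {R : Type*} [CommRing R] [IsDomain R]
    [LinearOrder R] {P : R[X]} (hP : P ≠ 0) {n : ℕ} (hn : P.roots.toFinset.card = n) :
    ∃ x : Fin n → R, StrictMono x ∧ (∀ i, P.IsRoot (x i)) ∧ ∀ y, P.IsRoot y → ∃ i, y = x i := by
  classical
  let e := P.roots.toFinset.orderIsoOfFin hn
  refine ⟨fun i => e i, fun i j hij => e.strictMono hij, fun i => ?_, fun y hy => ?_⟩
  · exact (mem_roots hP).1 (Multiset.mem_toFinset.1 (e i).2)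
  · exact ⟨e.symm ⟨y, Multiset.mem_toFinset.2 ((mem_roots hP).2 hy)⟩, by simp⟩

noncomputable def stdGaussianDensity (t : ℝ) : ℝ := exp (-t ^ 2 / 2) / √(2 * π)

lemma hasDerivAt_stdGaussianDensity (t : ℝ) :
    HasDerivAt stdGaussianDensity (-t * stdGaussianDensity t) t := by
  have h : HasDerivAt (fun t : ℝ => -t ^ 2 / 2) (-t) t :=
    ((hasDerivAt_pow 2 t).neg.div_const 2).congr_deriv (by ring)
  refine (h.exp.div_const √(2 * π)).congr_deriv ?_
  unfold stdGaussianDensity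
  ring

lemma integrable_eval_mul_stdGaussianDensity (p : ℝ[X]) :
    Integrable fun t => p.eval t * stdGaussianDensity t := by
  induction p using Polynomial.induction_on' with
  | add p q hp hq =>
    simp only [eval_add, add_mul]
    exact hp.add hq
  | monomial k a =>
    refine ((integrable_rpow_mul_exp_neg_mul_sq (b := 1 / 2) (by norm_num) (s := k)
      (by linarith [k.cast_nonneg (α := ℝ)])).const_mul (a / √(2 * π))).congr
      (ae_of_all _ fun t => ?_)
    simp only [rpow_natCast, eval_monomial, stdGaussianDensity]
    ring_nf

noncomputable def stdGaussianExpectation : ℝ[X] →ₗ[ℝ] ℝ where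
  toFun p := ∫ t, p.eval t * stdGaussianDensity t
  map_add' p q := by
    simp only [eval_add, add_mul]
    exact integral_add (integrable_eval_mul_stdGaussianDensity p)
      (integrable_eval_mul_stdGaussianDensity q)
  map_smul' c p := by
    simp only [eval_smul, smul_eq_mul, mul_assoc, integral_const_mul, RingHom.id_apply]

local notation "𝔼γ" => stdGaussianExpectation

lemma stdGaussianExpectation_apply (p : ℝ[X]) :
    𝔼γ p = ∫ t, p.eval t * stdGaussianDensity t := rfl

lemma stdGaussianExpectation_one : 𝔼γ 1 = 1 := by
  have hexp : (fun t : ℝ => exp (-t ^ 2 / 2)) = fun t => exp (-(1 / 2) * t ^ 2) := by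
    ext t; ring_nf
  simp only [stdGaussianExpectation_apply, eval_one, one_mul, stdGaussianDensity, integral_div]
  rw [hexp, integral_gaussian, div_div_eq_mul_div, div_one, mul_comm, div_self (by positivity)]

lemma stdGaussianExpectation_derivative_sub_X_mul (p : ℝ[X]) :
    𝔼γ (derivative p - X * p) = 0 :=
  integral_eq_zero_of_hasDerivAt_of_integrable
    (fun t => by
      refine ((p.hasDerivAt t).mul (hasDerivAt_stdGaussianDensity t)).congr_deriv ?_
      simp only [eval_sub, eval_mul, eval_X]
      ring)
    (integrable_eval_mul_stdGaussianDensity _) (integrable_eval_mul_stdGaussianDensity p)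

lemma stdGaussianExpectation_pos {p : ℝ[X]} (hp0 : p ≠ 0) (hp : ∀ x, 0 ≤ p.eval x) :
    0 < 𝔼γ p := by
  have hγ (t : ℝ) : 0 < stdGaussianDensity t := by unfold stdGaussianDensity; positivity
  rw [stdGaussianExpectation_apply, integral_pos_iff_support_of_nonneg
    (fun t => mul_nonneg (hp t) (hγ t).le) (integrable_eval_mul_stdGaussianDensity p)]
  obtain ⟨x, hx⟩ := p.roots.toFinset.exists_notMem
  have hsupp : {t | p.eval t ≠ 0} ⊆ Function.support fun t => p.eval t * stdGaussianDensity t :=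
    fun t ht => mul_ne_zero ht (hγ t).ne'
  refine lt_of_lt_of_le ?_ (measure_mono hsupp)
  exact (isOpen_ne_fun p.continuous continuous_const).measure_pos volume
    ⟨x, fun h => hx (by simpa [hp0] using h)⟩

noncomputable def hermiteReal (n : ℕ) : ℝ[X] := (hermite n).map (algebraMap ℤ ℝ)

lemma aeval_hermite (n : ℕ) (x : ℝ) : aeval x (hermite n) = (hermiteReal n).eval x :=
  (eval_map_algebraMap _ _).symm

lemma hermiteReal_monic (n : ℕ) : (hermiteReal n).Monic := (hermite_monic n).map _

lemma natDegree_hermiteReal (n : ℕ) : (hermiteReal n).natDegree = n := by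
  rw [hermiteReal, (hermite_monic n).natDegree_map, natDegree_hermite]

lemma hermiteReal_zero : hermiteReal 0 = 1 := by simp [hermiteReal]

lemma hermiteReal_succ (n : ℕ) :
    hermiteReal (n + 1) = X * hermiteReal n - derivative (hermiteReal n) := by
  simp only [hermiteReal, hermite_succ, Polynomial.map_sub, Polynomial.map_mul, map_X,
    derivative_map]

lemma derivative_hermiteReal_succ (n : ℕ) :
    derivative (hermiteReal (n + 1)) = C ((n : ℝ) + 1) * hermiteReal n := by
  induction n with
  | zero => simp [hermiteReal_succ, hermiteReal_zero]
  | succ n ih =>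
    rw [hermiteReal_succ (n + 1), derivative_sub, derivative_mul, derivative_X, ih,
      derivative_mul, derivative_C, hermiteReal_succ n]
    simp only [Nat.cast_succ, map_add, map_one]
    ring

lemma stdGaussianExpectation_mul_hermiteReal (n : ℕ) (q : ℝ[X]) :
    𝔼γ (q * hermiteReal n) = 𝔼γ (derivative^[n] q) := by
  induction n generalizing q with
  | zero => rw [hermiteReal_zero, mul_one, Function.iterate_zero_apply]
  | succ n ih =>
    have h : q * hermiteReal (n + 1) = derivative q * hermiteReal n -
        (derivative (q * hermiteReal n) - X * (q * hermiteReal n)) := by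
      rw [hermiteReal_succ, derivative_mul]; ring
    rw [h, map_sub, stdGaussianExpectation_derivative_sub_X_mul, sub_zero, ih,
      Function.iterate_succ_apply]

lemma isOrthogonalToLowerDegree_hermiteReal (n : ℕ) :
    IsOrthogonalToLowerDegree 𝔼γ (hermiteReal n) := fun q hq => by
  rw [stdGaussianExpectation_mul_hermiteReal,
    iterate_derivative_eq_zero (natDegree_hermiteReal n ▸ hq), map_zero]

lemma stdGaussianExpectation_mul_hermiteReal_of_monic {n : ℕ} {q : ℝ[X]} (hq : q.Monic)
    (hqn : q.natDegree = n) : 𝔼γ (q * hermiteReal n) = n.factorial := by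
  have hd : derivative^[n] q = C (n.factorial : ℝ) := by
    rw [eq_C_of_natDegree_le_zero ((natDegree_iterate_derivative q n).trans (by omega)),
      coeff_iterate_derivative, zero_add, ← hqn, hq.coeff_natDegree, Nat.descFactorial_self,
      nsmul_eq_mul, mul_one]
  rw [stdGaussianExpectation_mul_hermiteReal, hd, ← mul_one (C _), ← smul_eq_C_mul, map_smul,
    stdGaussianExpectation_one, smul_eq_mul, mul_one]

open Finset in
/-- `g = He_{m+1} / (X - x_i)` vanishes at every node but `x_i`, where it equals
`He_{m+1}'(x_i) = (m + 1) He_m(x_i)`; so the quadrature rule applied to `g * He_m` isolates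
the `i`-th weight. -/
theorem stdGaussianExpectation_lagrange_basis {m : ℕ} {x : Fin (m + 1) → ℝ}
    (hx : Function.Injective x) (hroot : ∀ i, (hermiteReal (m + 1)).IsRoot (x i))
    (i : Fin (m + 1)) :
    𝔼γ (Lagrange.basis univ x i) = m.factorial / ((m + 1) * (hermiteReal m).eval (x i) ^ 2) := by
  set g := hermiteReal (m + 1) /ₘ (X - C (x i))
  have hfac : (X - C (x i)) * g = hermiteReal (m + 1) := mul_divByMonic_eq_iff_isRoot.2 (hroot i)
  have hg : g.Monic := (monic_X_sub_C _).of_mul_monic_left (hfac ▸ hermiteReal_monic _)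
  have hgdeg : g.natDegree = m := by
    rw [natDegree_divByMonic _ (monic_X_sub_C _), natDegree_hermiteReal, natDegree_X_sub_C,
      Nat.add_sub_cancel]
  have hg_ne (j : Fin (m + 1)) (hj : j ≠ i) : g.eval (x j) = 0 := by
    have h := congrArg (eval (x j)) hfac
    rw [eval_mul, eval_sub, eval_X, eval_C, hroot j] at h
    exact (mul_eq_zero.1 h).resolve_left (sub_ne_zero.2 (hx.ne hj))
  have hg_eq : g.eval (x i) = (m + 1) * (hermiteReal m).eval (x i) := by
    have h := congrArg (fun p => (derivative p).eval (x i)) hfac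
    simpa [derivative_hermiteReal_succ] using h
  have key := map_eq_sum_lagrange_basis_of_orthogonal 𝔼γ (hermiteReal_monic _)
    (natDegree_hermiteReal _) (isOrthogonalToLowerDegree_hermiteReal _) hx hroot
    (p := g * hermiteReal m)
    (by rw [natDegree_mul hg.ne_zero (hermiteReal_monic m).ne_zero, hgdeg,
          natDegree_hermiteReal]; omega)
  rw [stdGaussianExpectation_mul_hermiteReal_of_monic hg hgdeg,
    sum_eq_single i (fun j _ hj => by rw [eval_mul, hg_ne j hj, zero_mul, mul_zero]) (by simp),
    eval_mul, hg_eq] at key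
  have hden : ((m : ℝ) + 1) * (hermiteReal m).eval (x i) ^ 2 ≠ 0 := by
    intro h
    have : (m.factorial : ℝ) = 0 := by
      rw [key]; linear_combination 𝔼γ (Lagrange.basis univ x i) * h
    exact m.factorial_ne_zero (by exact_mod_cast this)
  rw [eq_div_iff hden, key]
  ring

/-- Exactness of the Gauss–Hermite quadrature rule: for `n ≥ 1` the probabilists'
Hermite polynomial `He_n` has exactly `n` distinct real roots `x_1 < … < x_n`, and
for every real polynomial `p` of degree at most `2n - 1`,
`∫ p(x)·exp(-x²/2)/√(2π) dx = Σ_i w_i p(x_i)` with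
`w_i = (n-1)! / (n · He_{n-1}(x_i)²)`. -/
theorem gaussHermite_quadrature_exact (n : ℕ) (hn : 1 ≤ n) :
    ∃ x : Fin n → ℝ, StrictMono x ∧
      (∀ i, aeval (x i) (Polynomial.hermite n) = (0 : ℝ)) ∧
      (∀ y : ℝ, aeval y (Polynomial.hermite n) = (0 : ℝ) → ∃ i, y = x i) ∧
      (∀ p : Polynomial ℝ, p.natDegree ≤ 2 * n - 1 →
        ∫ t : ℝ, p.eval t * (Real.exp (-t ^ 2 / 2) / Real.sqrt (2 * Real.pi)) =
          ∑ i, ((n - 1).factorial : ℝ) /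
              ((n : ℝ) * (aeval (x i) (Polynomial.hermite (n - 1))) ^ 2) *
            p.eval (x i)) := by
  obtain ⟨m, rfl⟩ : ∃ m, n = m + 1 := ⟨n - 1, by omega⟩
  have horth := isOrthogonalToLowerDegree_hermiteReal (m + 1)
  obtain ⟨x, hmono, hroot, hall⟩ :=
    exists_strictMono_enum_roots (hermiteReal_monic _).ne_zero
      ((card_toFinset_roots_eq_natDegree_of_orthogonal 𝔼γ (fun _ => stdGaussianExpectation_pos)
        horth (hermiteReal_monic _)).trans (natDegree_hermiteReal _))
  refine ⟨x, hmono, fun i => (aeval_hermite _ _).trans (hroot i),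
    fun y hy => hall y ((aeval_hermite _ _).symm.trans hy), fun p hp => ?_⟩
  change 𝔼γ p = _
  rw [map_eq_sum_lagrange_basis_of_orthogonal 𝔼γ (hermiteReal_monic _) (natDegree_hermiteReal _)
    horth hmono.injective hroot (by omega)]
  refine Finset.sum_congr rfl fun i _ => ?_
  rw [stdGaussianExpectation_lagrange_basis hmono.injective hroot, Nat.add_sub_cancel,
    aeval_hermite]
  push_cast
  ring
end

section
/- The Gauss–Hermite quadrature weights sum to one: for every n ≥ 1, letting x_1, …, x_n be the (distinct, real) roots of the probabilists' Hermite polynomial He_n and w_i := (n−1)! / (n·(He_{n−1}(x_i))²), one has Σ_{i=1}^{n} w_i = 1. -/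
open MeasureTheory Real Polynomial

noncomputable def HP (n : ℕ) : Polynomial ℝ := (Polynomial.hermite n).map (Int.castRingHom ℝ)

lemma HP_succ (n : ℕ) : HP (n+1) = X * HP n - derivative (HP n) := by
  unfold HP
  rw [hermite_succ, Polynomial.map_sub, Polynomial.map_mul, map_X, derivative_map]

lemma HP_zero : HP 0 = 1 := by
  simp [HP, hermite_zero]

lemma derivative_HP (n : ℕ) : derivative (HP (n+1)) = C ((n : ℝ) + 1) * HP n := by
  induction n with
  | zero => rw [HP_succ, HP_zero]; simp
  | succ k ih =>
      rw [HP_succ (k+1), derivative_sub, derivative_mul, derivative_X, one_mul, ih,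
        derivative_mul, derivative_C, zero_mul, zero_add, HP_succ k]
      push_cast
      simp only [C_add, C_1]
      ring

lemma HP_rec (n : ℕ) : HP (n+2) = X * HP (n+1) - C ((n : ℝ) + 1) * HP n := by
  rw [HP_succ (n+1), derivative_HP]

noncomputable def QP : ℕ → Polynomial ℝ
  | 0 => 0
  | 1 => 1
  | (n+2) => X * QP (n+1) - C ((n : ℝ) + 1) * QP n

lemma QP_bezout (n : ℕ) :
    HP n * QP (n+1) - HP (n+1) * QP n = C ((n.factorial : ℝ)) := by
  induction n with
  | zero => rw [HP_zero]; simp [QP]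
  | succ k ih =>
      have h2 : QP (k+2) = X * QP (k+1) - C ((k : ℝ) + 1) * QP k := rfl
      rw [h2, HP_rec k]
      have : HP (k+1) * (X * QP (k+1) - C ((k : ℝ) + 1) * QP k) -
          (X * HP (k+1) - C ((k : ℝ) + 1) * HP k) * QP (k+1)
          = C ((k : ℝ) + 1) * (HP k * QP (k+1) - HP (k+1) * QP k) := by ring
      rw [this, ih, ← C_mul]
      congr 1
      rw [Nat.factorial_succ]
      push_cast
      ring

lemma QP_natDegree_le : ∀ n : ℕ, (QP n).natDegree ≤ n ∧ (QP (n+1)).natDegree ≤ n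
  | 0 => by constructor <;> simp [QP]
  | (n+1) => by
      obtain ⟨h1, h2⟩ := QP_natDegree_le n
      refine ⟨h2.trans (Nat.le_succ n), ?_⟩
      show (X * QP (n+1) - C ((n : ℝ) + 1) * QP n).natDegree ≤ n + 1
      refine le_trans (natDegree_sub_le _ _) (max_le ?_ ?_)
      · refine le_trans (natDegree_mul_le) ?_
        rw [natDegree_X]
        omega
      · refine le_trans (natDegree_mul_le) ?_
        rw [natDegree_C]
        omega

lemma QP_coeff (n : ℕ) : (QP (n+1)).coeff n = 1 := by
  induction n with
  | zero => simp [QP]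
  | succ k ih =>
      have h2 : QP (k+2) = X * QP (k+1) - C ((k : ℝ) + 1) * QP k := rfl
      rw [h2, coeff_sub, coeff_X_mul, ih, coeff_C_mul,
        coeff_eq_zero_of_natDegree_lt (lt_of_le_of_lt (QP_natDegree_le k).1 (Nat.lt_succ_self k))]
      ring

/-- The Gauss–Hermite quadrature weights sum to one: for `n ≥ 1`, if
`x_1 < … < x_n` enumerate the real roots of the probabilists' Hermite polynomial
`He_n`, then `Σ_i (n-1)! / (n · He_{n-1}(x_i)²) = 1`. -/
theorem gaussHermite_weights_sum_to_one (n : ℕ) (hn : 1 ≤ n) (x : Fin n → ℝ)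
    (hmono : StrictMono x)
    (hroot : ∀ i, aeval (x i) (Polynomial.hermite n) = (0 : ℝ))
    (hall : ∀ y : ℝ, aeval y (Polynomial.hermite n) = (0 : ℝ) → ∃ i, y = x i) :
    ∑ i, ((n - 1).factorial : ℝ) /
        ((n : ℝ) * (aeval (x i) (Polynomial.hermite (n - 1))) ^ 2) = 1 := by
  classical
  obtain ⟨m, rfl⟩ : ∃ m, n = m + 1 := ⟨n - 1, (Nat.succ_pred_eq_of_pos hn).symm⟩
  have haev : ∀ (y : ℝ) (k : ℕ), aeval y (Polynomial.hermite k) = eval y (HP k) := by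
    intro y k
    rw [HP, eval_map, aeval_def, algebraMap_int_eq]
  have hHmonic : ∀ k, (HP k).Monic := fun k => (hermite_monic k).map _
  have hHdeg : ∀ k, (HP k).natDegree = k := fun k => by
    rw [HP, (hermite_monic k).natDegree_map, natDegree_hermite]
  have hinj : Set.InjOn x (Finset.univ : Finset (Fin (m+1))) := hmono.injective.injOn
  set s : Finset (Fin (m+1)) := Finset.univ with hs
  have hcard : s.card = m + 1 := by simp [hs]
  set p : Polynomial ℝ := Lagrange.nodal s x with hp
  have hHeval : ∀ i, eval (x i) (HP (m+1)) = 0 := fun i => by rw [← haev]; exact hroot i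
  have hHP : HP (m+1) = p := by
    by_cases hz : HP (m+1) - p = 0
    · exact sub_eq_zero.mp hz
    · exfalso
      apply hz
      apply eq_zero_of_natDegree_lt_card_of_eval_eq_zero _ hmono.injective
      · intro i
        rw [eval_sub, hHeval i, Lagrange.eval_nodal_at_node (Finset.mem_univ i), sub_zero]
      · rw [Fintype.card_fin]
        have hdlt : (HP (m+1) - p).degree < (HP (m+1)).degree := by
          apply degree_sub_lt
          · rw [degree_eq_natDegree (hHmonic (m+1)).ne_zero,
              degree_eq_natDegree (Lagrange.nodal_monic).ne_zero, hHdeg,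
              Lagrange.natDegree_nodal, hcard]
          · exact (hHmonic (m+1)).ne_zero
          · rw [(hHmonic (m+1)).leadingCoeff, (Lagrange.nodal_monic).leadingCoeff]
        rw [degree_eq_natDegree (hHmonic (m+1)).ne_zero, hHdeg] at hdlt
        exact (Polynomial.natDegree_lt_iff_degree_lt hz).mpr hdlt
  set h : Fin (m+1) → ℝ := fun i => eval (x i) (HP m) with hh
  set q : Fin (m+1) → ℝ := fun i => eval (x i) (QP (m+1)) with hq
  set d : Fin (m+1) → ℝ := fun i => eval (x i) (Lagrange.nodal (s.erase i) x) with hd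
  have hbez : ∀ i, h i * q i = (m.factorial : ℝ) := by
    intro i
    have := congrArg (eval (x i)) (QP_bezout m)
    simpa [eval_sub, eval_mul, hHeval i] using this
  have hhne : ∀ i, h i ≠ 0 := by
    intro i hzero
    have := hbez i
    rw [hzero, zero_mul] at this
    exact (Nat.cast_ne_zero.mpr m.factorial_ne_zero) this.symm
  have hderiv : ∀ i, ((m : ℝ) + 1) * h i = d i := by
    intro i
    have h1 : eval (x i) (derivative (HP (m+1))) = ((m : ℝ) + 1) * h i := by
      rw [derivative_HP, eval_mul, eval_C]
    have h2 : eval (x i) (derivative p) = d i := by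
      rw [hd]
      exact Lagrange.eval_nodal_derivative_eval_node_eq (Finset.mem_univ i)
    rw [← h1, hHP, h2]
  have hdne : ∀ i, d i ≠ 0 := by
    intro i
    rw [← hderiv i]
    exact mul_ne_zero (by positivity) (hhne i)
  have hm1 : ((m : ℝ) + 1) ≠ 0 := by positivity
  have hsummand : ∀ i, (((m + 1 - 1).factorial : ℕ) : ℝ) /
      (((m + 1 : ℕ) : ℝ) * (aeval (x i) (Polynomial.hermite (m + 1 - 1))) ^ 2) = q i / d i := by
    intro i
    rw [Nat.add_sub_cancel, haev]
    have e1 : eval (x i) (HP m) = h i := rfl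
    rw [e1, ← hderiv i]
    push_cast
    rw [div_eq_div_iff (by exact mul_ne_zero hm1 (pow_ne_zero 2 (hhne i)))
      (mul_ne_zero hm1 (hhne i))]
    linear_combination (-((m : ℝ) + 1) * h i) * hbez i
  rw [Finset.sum_congr rfl (fun i _ => hsummand i)]
  -- Lagrange interpolation: sum of q i / d i equals leading coefficient of QP (m+1)
  have hfdeg : (QP (m+1)).degree < (s.card : WithBot ℕ) := by
    have h1 : (QP (m+1)).degree ≤ (m : WithBot ℕ) := by
      refine degree_le_natDegree.trans ?_
      exact_mod_cast (QP_natDegree_le m).2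
    refine lt_of_le_of_lt h1 ?_
    rw [hcard]
    exact_mod_cast Nat.lt_succ_self m
  have hinterp := Lagrange.eq_interpolate hinj hfdeg
  have hco := congrArg (fun g : Polynomial ℝ => g.coeff m) hinterp
  simp only [Lagrange.interpolate_apply, finset_sum_coeff, coeff_C_mul] at hco
  have hbasis : ∀ i, (Lagrange.basis s x i).coeff m = (d i)⁻¹ := by
    intro i
    rw [Lagrange.basis_eq_prod_sub_inv_mul_nodal_div (Finset.mem_univ i),
      ← Lagrange.nodal_erase_eq_nodal_div (Finset.mem_univ i), coeff_C_mul,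
      Lagrange.nodalWeight_eq_eval_nodal_erase_inv]
    have hmono2 : (Lagrange.nodal (s.erase i) x).Monic := Lagrange.nodal_monic
    have hnd : (Lagrange.nodal (s.erase i) x).natDegree = m := by
      rw [Lagrange.natDegree_nodal, Finset.card_erase_of_mem (Finset.mem_univ i), hcard]
      omega
    have hc1 : (Lagrange.nodal (s.erase i) x).coeff m = 1 := by
      have hcn := hmono2.coeff_natDegree
      rw [hnd] at hcn
      exact hcn
    rw [hc1, mul_one]
  rw [QP_coeff m] at hco
  rw [Finset.sum_congr rfl (fun i _ => by rw [div_eq_mul_inv, ← hbasis i])]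
  exact hco.symm
end

section
/- Cumulant scaling for the Edgeworth expansion: let Z_1, …, Z_r be independent identically distributed real random variables on a probability space (Ω, 𝓕, μ), each with mean m and standard deviation σ > 0, set Z' := (Z_1 − m)/σ and X := (1/√r)·Σ_{i=1}^{r} (Z_i − m)/σ, and assume there exists δ > 0 such that ω ↦ exp(s·Z'(ω)) is μ-integrable for every s with |s| ≤ δ. Then for every l ≥ 1, the l-th cumulant of X satisfies iteratedDeriv l (cgf X μ) 0 = r^{1 − l/2} · iteratedDeriv l (cgf Z' μ) 0; in particular κ_{X,1} = 0, κ_{X,2} = 1, and κ_{X,l} = ν_l / r^{l/2 − 1} for l ≥ 3, where ν_l is the l-th cumulant of Z'. -/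
open MeasureTheory ProbabilityTheory Real

/-!
Write `X = r^{-1/2} ∑ Yᵢ` with `Yᵢ = (Zᵢ - m)/σ` i.i.d. copies of `Z'`. Independence gives
`mgf X t = mgf Z' (t/√r) ^ r`, hence `cgf X t = r · cgf Z' (t/√r)` for every `t`: no integrability
is needed here because `log (a ^ r) = r log a` holds for all real `a`. Differentiating `l` times
at `0` produces the factor `r · r^{-l/2}`. Since the mgf of `Z'` is finite near `0`, its first two
cumulants are its mean `0` and its variance `1`.
-/

lemma iteratedDeriv_comp_mul_left {𝕜 F : Type*} [NontriviallyNormedField 𝕜]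
    [NormedAddCommGroup F] [NormedSpace 𝕜 F] (n : ℕ) (c : 𝕜) (f : 𝕜 → F) (x : 𝕜) :
    iteratedDeriv n (fun y => f (c * y)) x = c ^ n • iteratedDeriv n f (c * x) := by
  induction n generalizing f with
  | zero => simp
  | succ n ih =>
    have hderiv : deriv (fun y => f (c * y)) = c • fun y => deriv f (c * y) :=
      funext (deriv_comp_mul_left c f)
    rw [iteratedDeriv_succ', iteratedDeriv_succ', hderiv, iteratedDeriv_const_smul_field, ih,
      smul_smul, pow_succ']

section Cumulants

variable {Ω ι : Type*} [MeasurableSpace Ω] {μ : Measure Ω}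

lemma cgf_const_mul (X : Ω → ℝ) (c t : ℝ) :
    cgf (fun ω => c * X ω) μ t = cgf X μ (c * t) := by
  rw [cgf, cgf, mgf_const_mul]

lemma cgf_sum_of_identDistrib [Fintype ι] {X : ι → Ω → ℝ} {j : ι} (h_indep : iIndepFun X μ)
    (hident : ∀ i, IdentDistrib (X i) (X j) μ μ) (t : ℝ) :
    cgf (∑ i, X i) μ t = Fintype.card ι * cgf (X j) μ t := by
  rw [cgf, mgf_sum_of_identDistrib₀ (fun i => (hident i).aemeasurable_fst) h_indep
    (fun i _ k _ => (hident i).trans (hident k).symm) (Finset.mem_univ j), Real.log_pow,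
    Finset.card_univ, cgf]

lemma iteratedDeriv_cgf_const_mul_sum_of_identDistrib [Fintype ι] {X : ι → Ω → ℝ} {j : ι}
    (h_indep : iIndepFun X μ) (hident : ∀ i, IdentDistrib (X i) (X j) μ μ) (c : ℝ) (n : ℕ)
    (t : ℝ) :
    iteratedDeriv n (cgf (fun ω => c * ∑ i, X i ω) μ) t
      = Fintype.card ι * c ^ n * iteratedDeriv n (cgf (X j) μ) (c * t) := by
  have hcgf : cgf (fun ω => c * ∑ i, X i ω) μ
      = fun t => Fintype.card ι * cgf (X j) μ (c * t) := by
    funext t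
    rw [← cgf_sum_of_identDistrib h_indep hident, ← cgf_const_mul]
    simp only [Finset.sum_apply]
  rw [hcgf, iteratedDeriv_const_mul_field, iteratedDeriv_comp_mul_left, smul_eq_mul, mul_assoc]

lemma zero_mem_interior_integrableExpSet {X : Ω → ℝ} {δ : ℝ} (hδ : 0 < δ)
    (hint : ∀ s : ℝ, |s| ≤ δ → Integrable (fun ω => exp (s * X ω)) μ) :
    0 ∈ interior (integrableExpSet X μ) :=
  mem_interior_iff_mem_nhds.mpr <| Filter.mem_of_superset (Metric.closedBall_mem_nhds 0 hδ)
    fun s hs => hint s (by simpa using hs)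

lemma integral_sub_div_sq_eq_one {X : Ω → ℝ} {m σ : ℝ} (hσ : σ ≠ 0)
    (hsd : ∫ ω, (X ω - m) ^ 2 ∂μ = σ ^ 2) :
    ∫ ω, ((X ω - m) / σ) ^ 2 ∂μ = 1 := by
  simp_rw [div_pow]
  rw [integral_div, hsd, div_self (pow_ne_zero 2 hσ)]

variable [IsProbabilityMeasure μ] {X : Ω → ℝ}

lemma iteratedDeriv_one_cgf_zero (h : 0 ∈ interior (integrableExpSet X μ)) :
    iteratedDeriv 1 (cgf X μ) 0 = ∫ ω, X ω ∂μ := by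
  simp [deriv_cgf_zero h]

lemma iteratedDeriv_two_cgf_zero (h : 0 ∈ interior (integrableExpSet X μ)) :
    iteratedDeriv 2 (cgf X μ) 0 = ∫ ω, X ω ^ 2 ∂μ - (∫ ω, X ω ∂μ) ^ 2 := by
  simp [iteratedDeriv_two_cgf h, deriv_cgf_zero h]

lemma integral_sub_div_eq_zero {m σ : ℝ} (hX : Integrable X μ) (hmean : ∫ ω, X ω ∂μ = m) :
    ∫ ω, (X ω - m) / σ ∂μ = 0 := by
  simp [integral_div, integral_sub hX (integrable_const m), hmean]

end Cumulants

lemma mul_inv_sqrt_pow {x : ℝ} (hx : 0 < x) (l : ℕ) :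
    x * (√x)⁻¹ ^ l = x ^ (1 - (l : ℝ) / 2) := by
  rw [sqrt_eq_rpow, ← rpow_neg hx.le, ← rpow_mul_natCast hx.le,
    show (1 - l / 2 : ℝ) = 1 + -(1 / 2) * l by ring, rpow_add hx, rpow_one]

theorem edgeworth_cumulant_scaling_general
    {Ω : Type*} [MeasurableSpace Ω] {μ : Measure Ω} [IsProbabilityMeasure μ]
    (r : ℕ) (hr : 0 < r) (Z : Fin r → Ω → ℝ)
    (hindep : iIndepFun Z μ)
    (hident : ∀ i, IdentDistrib (Z i) (Z ⟨0, hr⟩) μ μ)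
    (m σ : ℝ) (hσ : 0 < σ)
    (hmean : ∀ i, ∫ ω, Z i ω ∂μ = m)
    (hsd : ∀ i, ∫ ω, (Z i ω - m) ^ 2 ∂μ = σ ^ 2)
    (Z' X : Ω → ℝ)
    (hZ' : Z' = fun ω => (Z ⟨0, hr⟩ ω - m) / σ)
    (hX : X = fun ω => (1 / Real.sqrt r) * ∑ i, (Z i ω - m) / σ)
    (hint : ∃ δ > (0 : ℝ), ∀ s : ℝ, |s| ≤ δ →
      Integrable (fun ω => Real.exp (s * Z' ω)) μ) :
    (∀ l : ℕ, 1 ≤ l →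
      iteratedDeriv l (cgf X μ) 0 =
        (r : ℝ) ^ ((1 : ℝ) - (l : ℝ) / 2) * iteratedDeriv l (cgf Z' μ) 0) ∧
    iteratedDeriv 1 (cgf X μ) 0 = 0 ∧
    iteratedDeriv 2 (cgf X μ) 0 = 1 ∧
    (∀ l : ℕ, 3 ≤ l →
      iteratedDeriv l (cgf X μ) 0 =
        iteratedDeriv l (cgf Z' μ) 0 / (r : ℝ) ^ ((l : ℝ) / 2 - 1)) := by
  obtain ⟨δ, hδ, hint⟩ := hint
  have hstd : Measurable fun x : ℝ => (x - m) / σ := by fun_prop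
  have hscaling : ∀ l : ℕ, iteratedDeriv l (cgf X μ) 0 =
      (r : ℝ) ^ ((1 : ℝ) - l / 2) * iteratedDeriv l (cgf Z' μ) 0 := fun l => by
    rw [hX, hZ', iteratedDeriv_cgf_const_mul_sum_of_identDistrib
      (X := fun i ω => (Z i ω - m) / σ) (hindep.comp _ fun _ => hstd)
      (fun i => (hident i).comp hstd), Fintype.card_fin, mul_zero, one_div,
      mul_inv_sqrt_pow (Nat.cast_pos.mpr hr)]
  subst hZ'
  have h0 := zero_mem_interior_integrableExpSet hδ hint
  have hZ₀ : Integrable (Z ⟨0, hr⟩) μ := by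
    refine (((integrable_of_mem_interior_integrableExpSet h0).const_mul σ).add
      (integrable_const m)).congr (ae_of_all _ fun ω => ?_)
    simp [mul_div_cancel₀ _ hσ.ne']
  have hmean₀ := integral_sub_div_eq_zero (σ := σ) hZ₀ (hmean _)
  refine ⟨fun l _ => hscaling l, ?_, ?_, fun l _ => ?_⟩
  · rw [hscaling, iteratedDeriv_one_cgf_zero h0, hmean₀, mul_zero]
  · rw [hscaling, iteratedDeriv_two_cgf_zero h0, hmean₀,
      integral_sub_div_sq_eq_one hσ.ne' (hsd _)]
    norm_num
  · rw [hscaling, show (1 : ℝ) - l / 2 = -(l / 2 - 1) by ring, rpow_neg (Nat.cast_nonneg r),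
      inv_mul_eq_div]

/-- Cumulant scaling for the Edgeworth expansion: for i.i.d. random variables
`Z_1, …, Z_r` with mean `m` and standard deviation `σ > 0`, setting
`Z' = (Z_1 - m)/σ` and `X = (1/√r) Σ_i (Z_i - m)/σ`, and assuming the mgf of `Z'`
exists near `0`, the cumulants `κ_{X,l} = iteratedDeriv l (cgf X μ) 0` satisfy
`κ_{X,l} = r^(1 - l/2) ν_l` for `l ≥ 1`; in particular `κ_{X,1} = 0`,
`κ_{X,2} = 1` and `κ_{X,l} = ν_l / r^(l/2 - 1)` for `l ≥ 3`, where `ν_l` is the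
`l`-th cumulant of `Z'`. -/
theorem edgeworth_cumulant_scaling
    {Ω : Type*} [MeasurableSpace Ω] {μ : Measure Ω} [IsProbabilityMeasure μ]
    (r : ℕ) (hr : 0 < r) (Z : Fin r → Ω → ℝ) (hmeas : ∀ i, Measurable (Z i))
    (hindep : iIndepFun Z μ)
    (hident : ∀ i, IdentDistrib (Z i) (Z ⟨0, hr⟩) μ μ)
    (m σ : ℝ) (hσ : 0 < σ)
    (hmean : ∀ i, ∫ ω, Z i ω ∂μ = m)
    (hsd : ∀ i, ∫ ω, (Z i ω - m) ^ 2 ∂μ = σ ^ 2)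
    (Z' X : Ω → ℝ)
    (hZ' : Z' = fun ω => (Z ⟨0, hr⟩ ω - m) / σ)
    (hX : X = fun ω => (1 / Real.sqrt r) * ∑ i, (Z i ω - m) / σ)
    (hint : ∃ δ > (0 : ℝ), ∀ s : ℝ, |s| ≤ δ →
      Integrable (fun ω => Real.exp (s * Z' ω)) μ) :
    (∀ l : ℕ, 1 ≤ l →
      iteratedDeriv l (cgf X μ) 0 =
        (r : ℝ) ^ ((1 : ℝ) - (l : ℝ) / 2) * iteratedDeriv l (cgf Z' μ) 0) ∧
    iteratedDeriv 1 (cgf X μ) 0 = 0 ∧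
    iteratedDeriv 2 (cgf X μ) 0 = 1 ∧
    (∀ l : ℕ, 3 ≤ l →
      iteratedDeriv l (cgf X μ) 0 =
        iteratedDeriv l (cgf Z' μ) 0 / (r : ℝ) ^ ((l : ℝ) / 2 - 1)) :=
  edgeworth_cumulant_scaling_general r hr Z hindep hident m σ hσ hmean hsd Z' X hZ' hX hint
end
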